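/- Let I ⊆ ℝ be an interval and let γ : I → ℝ² be an injective unit-speed curve of class C³ whose curvature satisfies κ(s) > 0 for all s ∈ I. Suppose that for all s, t ∈ I one has (κ(s)/2)·‖γ(s) − γ(t)‖² − ⟨γ(s) − γ(t), ν(s)⟩ ≥ 0 (i.e. the inscribed radius is at least 1/κ at every point). Then κ is constant on I. -/

import Mathlib

/-!
Fix an interior point `x` of `I` and let `ψ t` be `κ(x)/2 ‖γ x - γ t‖² - ⟨γ x - γ t, ν(x)⟩`.
By hypothesis `ψ ≥ 0` near `x`, while `ψ x = ψ' x = 0` and, because `γ` has unit speed and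
`κ(x) = -⟨γ''(x), ν(x)⟩`, also `ψ'' x = 0`. A function vanishing to second order at a local
minimum has vanishing third derivative there (otherwise it changes sign), and since
`⟨γ', γ''⟩ = 0` this third derivative is `⟨γ'''(x), ν(x)⟩ = -κ'(x)`. Hence `κ' = 0` on the
interior of the interval `I`, and `κ` is constant on `I`.
-/

open Real Set

noncomputable section

/-- The second derivative of a plane curve, componentwise. -/
def d2 (γ : ℝ → ℝ × ℝ) (s : ℝ) : ℝ × ℝ :=
  (deriv (fun u => (deriv γ u).1) s, deriv (fun u => (deriv γ u).2) s)

/-- The outward unit normal `ν(s) = (γ'₂(s), −γ'₁(s))` of a unit-speed plane curve. -/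
def nor (γ : ℝ → ℝ × ℝ) (s : ℝ) : ℝ × ℝ := ((deriv γ s).2, -(deriv γ s).1)

/-- The geodesic curvature `κ(s) = γ'₁(s)·γ''₂(s) − γ'₂(s)·γ''₁(s)` of a unit-speed
plane curve. -/
def curv (γ : ℝ → ℝ × ℝ) (s : ℝ) : ℝ :=
  (deriv γ s).1 * (d2 γ s).2 - (deriv γ s).2 * (d2 γ s).1

/-- Euclidean inner product on `ℝ²`. -/
def dot (v w : ℝ × ℝ) : ℝ := v.1 * w.1 + v.2 * w.2

/-- Squared Euclidean norm on `ℝ²`. -/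
def nsq (v : ℝ × ℝ) : ℝ := v.1 ^ 2 + v.2 ^ 2

open Filter Topology

theorem eventually_nhdsGT_neg_of_hasDerivAt_neg {f : ℝ → ℝ} {c x : ℝ} (hf : HasDerivAt f c x)
    (hc : c < 0) (hx : f x = 0) : ∀ᶠ t in 𝓝[>] x, f t < 0 := by
  have hslope := (hasDerivAt_iff_tendsto_slope.mp hf).mono_left (nhdsGT_le_nhdsNE x)
  filter_upwards [hslope.eventually (eventually_lt_nhds hc), self_mem_nhdsWithin]
    with t hneg (hxt : x < t)
  rwa [slope_neg_iff_of_le hxt.le, hx] at hneg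

theorem eventually_nhdsGT_neg_of_deriv_neg {f f' : ℝ → ℝ} {x : ℝ}
    (hf : ∀ t, HasDerivAt f (f' t) t) (hx : f x = 0) (hf' : ∀ᶠ t in 𝓝[>] x, f' t < 0) :
    ∀ᶠ t in 𝓝[>] x, f t < 0 := by
  obtain ⟨u, hxu, hneg⟩ := (nhdsGT_basis x).eventually_iff.mp hf'
  refine (nhdsGT_basis x).eventually_iff.mpr ⟨u, hxu, fun t ht => ?_⟩
  obtain ⟨ξ, hξ, hslope⟩ := exists_hasDerivAt_eq_slope f f' ht.1
    (fun y _ => (hf y).continuousAt.continuousWithinAt) (fun y _ => hf y)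
  have : (f t - f x) / (t - x) < 0 := hslope ▸ hneg ⟨hξ.1, hξ.2.trans ht.2⟩
  rwa [← slope_def_field, slope_neg_iff_of_le ht.1.le, hx] at this

theorem third_deriv_nonneg_of_nonneg_nhdsGT {ψ ψ₁ ψ₂ : ℝ → ℝ} {c x : ℝ}
    (hψ : ∀ t, HasDerivAt ψ (ψ₁ t) t) (hψ₁ : ∀ t, HasDerivAt ψ₁ (ψ₂ t) t)
    (hψ₂ : HasDerivAt ψ₂ c x) (h₀ : ψ x = 0) (h₁ : ψ₁ x = 0) (h₂ : ψ₂ x = 0)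
    (hnonneg : ∀ᶠ t in 𝓝[>] x, 0 ≤ ψ t) : 0 ≤ c := by
  by_contra! hc
  have hneg := eventually_nhdsGT_neg_of_deriv_neg hψ h₀ <|
    eventually_nhdsGT_neg_of_deriv_neg hψ₁ h₁ <|
    eventually_nhdsGT_neg_of_hasDerivAt_neg hψ₂ hc h₂
  obtain ⟨t, hpos, hneg⟩ := (hnonneg.and hneg).exists
  exact hpos.not_gt hneg

theorem third_deriv_eq_zero_of_nonneg_nhds {ψ ψ₁ ψ₂ : ℝ → ℝ} {c x : ℝ}
    (hψ : ∀ t, HasDerivAt ψ (ψ₁ t) t) (hψ₁ : ∀ t, HasDerivAt ψ₁ (ψ₂ t) t)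
    (hψ₂ : HasDerivAt ψ₂ c x) (h₀ : ψ x = 0) (h₁ : ψ₁ x = 0) (h₂ : ψ₂ x = 0)
    (hnonneg : ∀ᶠ t in 𝓝 x, 0 ≤ ψ t) : c = 0 := by
  have hright := third_deriv_nonneg_of_nonneg_nhdsGT hψ hψ₁ hψ₂ h₀ h₁ h₂
    (nhdsWithin_le_nhds hnonneg)
  -- the left of `x`, through the reflection `t ↦ 2x - t`
  set r : ℝ → ℝ := fun t => 2 * x - t
  have hr : ∀ t, HasDerivAt r (-1) t := fun t => by simpa using (hasDerivAt_id t).const_sub (2 * x)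
  have hrx : r x = x := by ring
  have hleft := third_deriv_nonneg_of_nonneg_nhdsGT (ψ := ψ ∘ r) (ψ₁ := -(ψ₁ ∘ r))
    (ψ₂ := ψ₂ ∘ r) (c := -c) (x := x)
    (fun t => by simpa using (hψ (r t)).comp t (hr t))
    (fun t => by simpa using ((hψ₁ (r t)).comp t (hr t)).neg)
    (((hrx ▸ hψ₂).comp x (hr x)).congr_deriv (mul_neg_one c))
    (by simpa [hrx]) (by simpa [hrx]) (by simpa [hrx])
    (nhdsWithin_le_nhds <|
      ((continuous_const.sub continuous_id).tendsto' x x hrx).eventually hnonneg)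
  linarith

theorem Convex.eq_of_forall_hasDerivAt_eq_zero {D : Set ℝ} (hD : Convex ℝ D) {f : ℝ → ℝ}
    (hf : ContinuousOn f D) (hf' : ∀ x ∈ interior D, HasDerivAt f 0 x) {x y : ℝ} (hx : x ∈ D)
    (hy : y ∈ D) : f x = f y := by
  have hdiff : DifferentiableOn ℝ f (interior D) := fun z hz =>
    (hf' z hz).differentiableAt.differentiableWithinAt
  have hmono := monotoneOn_of_deriv_nonneg hD hf hdiff fun z hz => (hf' z hz).deriv.ge
  have hanti := antitoneOn_of_deriv_nonpos hD hf hdiff fun z hz => (hf' z hz).deriv.le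
  rcases le_total x y with hxy | hyx
  · exact le_antisymm (hmono hx hy hxy) (hanti hx hy hxy)
  · exact le_antisymm (hanti hy hx hyx) (hmono hy hx hyx)

theorem HasDerivAt.fst {u : ℝ → ℝ × ℝ} {u' : ℝ × ℝ} {t : ℝ} (hu : HasDerivAt u u' t) :
    HasDerivAt (fun s => (u s).1) u'.1 t :=
  HasFDerivAtFilter.fst hu

theorem HasDerivAt.snd {u : ℝ → ℝ × ℝ} {u' : ℝ × ℝ} {t : ℝ} (hu : HasDerivAt u u' t) :
    HasDerivAt (fun s => (u s).2) u'.2 t :=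
  HasFDerivAtFilter.snd hu

theorem hasDerivAt_dot {u v : ℝ → ℝ × ℝ} {u' v' : ℝ × ℝ} {t : ℝ} (hu : HasDerivAt u u' t)
    (hv : HasDerivAt v v' t) :
    HasDerivAt (fun s => dot (u s) (v s)) (dot u' (v t) + dot (u t) v') t :=
  ((hu.fst.mul hv.fst).add (hu.snd.mul hv.snd)).congr_deriv (by simp only [dot]; ring)

theorem hasDerivAt_nsq {u : ℝ → ℝ × ℝ} {u' : ℝ × ℝ} {t : ℝ} (hu : HasDerivAt u u' t) :
    HasDerivAt (fun s => nsq (u s)) (2 * dot (u t) u') t :=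
  ((hu.fst.pow 2).add (hu.snd.pow 2)).congr_deriv (by simp only [dot]; push_cast; ring)

theorem dot_deriv_deriv_eq_zero_of_nsq_deriv_eventually_eq_one {γ : ℝ → ℝ × ℝ} {s : ℝ}
    {γ'' : ℝ × ℝ} (hγ'' : HasDerivAt (deriv γ) γ'' s)
    (hunit : ∀ᶠ t in 𝓝 s, nsq (deriv γ t) = 1) : dot (deriv γ s) γ'' = 0 := by
  have := (hasDerivAt_nsq hγ'').unique ((hasDerivAt_const s (1 : ℝ)).congr_of_eventuallyEq hunit)
  linarith

theorem d2_eq_deriv {γ : ℝ → ℝ × ℝ} {s : ℝ} (hγ' : DifferentiableAt ℝ (deriv γ) s) :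
    d2 γ s = deriv (deriv γ) s :=
  Prod.ext hγ'.hasDerivAt.fst.deriv hγ'.hasDerivAt.snd.deriv

theorem curv_eq_neg_dot_nor {γ : ℝ → ℝ × ℝ} {s : ℝ} (hγ' : DifferentiableAt ℝ (deriv γ) s) :
    curv γ s = -dot (deriv (deriv γ) s) (nor γ s) := by
  rw [curv, d2_eq_deriv hγ', dot, nor]
  ring

theorem dot_deriv_nor (γ : ℝ → ℝ × ℝ) (s : ℝ) : dot (deriv γ s) (nor γ s) = 0 := by
  rw [dot, nor]
  ring

theorem hasDerivAt_nor {γ : ℝ → ℝ × ℝ} {γ'' : ℝ × ℝ} {s : ℝ} (h : HasDerivAt (deriv γ) γ'' s) :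
    HasDerivAt (nor γ) (γ''.2, -γ''.1) s :=
  h.snd.prodMk h.fst.neg

/-- `κ(s) / 2` times the power of the point `γ t` with respect to the osculating circle of the
unit-speed curve `γ` at `s`, whose centre is `γ s - ν(s) / κ(s)`. -/
def osculatingPower (γ : ℝ → ℝ × ℝ) (s t : ℝ) : ℝ :=
  curv γ s / 2 * nsq (γ s - γ t) - dot (γ s - γ t) (nor γ s)

theorem hasDerivAt_osculatingPower {γ : ℝ → ℝ × ℝ} {s t : ℝ} {v : ℝ × ℝ}
    (h : HasDerivAt γ v t) :
    HasDerivAt (osculatingPower γ s) (dot v (nor γ s) - curv γ s * dot (γ s - γ t) v) t := by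
  have hd := h.const_sub (γ s)
  exact ((hasDerivAt_nsq hd).const_mul _ |>.sub (hasDerivAt_dot hd (hasDerivAt_const t _)))
    |>.congr_deriv
      (by simp only [dot, Prod.fst_neg, Prod.snd_neg, Prod.fst_zero, Prod.snd_zero]; ring)

theorem hasDerivAt_osculatingPower_deriv {γ : ℝ → ℝ × ℝ} {s t : ℝ} {a : ℝ × ℝ}
    (h₁ : HasDerivAt γ (deriv γ t) t) (h₂ : HasDerivAt (deriv γ) a t) :
    HasDerivAt (fun t => dot (deriv γ t) (nor γ s) - curv γ s * dot (γ s - γ t) (deriv γ t))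
      (dot a (nor γ s) + curv γ s * (nsq (deriv γ t) - dot (γ s - γ t) a)) t :=
  ((hasDerivAt_dot h₂ (hasDerivAt_const t _)).sub
    ((hasDerivAt_dot (h₁.const_sub (γ s)) h₂).const_mul _)).congr_deriv
    (by simp only [dot, nsq, Prod.fst_neg, Prod.snd_neg, Prod.fst_zero, Prod.snd_zero]; ring)

theorem hasDerivAt_osculatingPower_deriv_deriv {γ : ℝ → ℝ × ℝ} {s t : ℝ} {b : ℝ × ℝ}
    (h₁ : HasDerivAt γ (deriv γ t) t) (h₂ : HasDerivAt (deriv γ) (deriv (deriv γ) t) t)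
    (h₃ : HasDerivAt (deriv (deriv γ)) b t) :
    HasDerivAt (fun t => dot (deriv (deriv γ) t) (nor γ s) +
        curv γ s * (nsq (deriv γ t) - dot (γ s - γ t) (deriv (deriv γ) t)))
      (dot b (nor γ s) +
        curv γ s * (3 * dot (deriv γ t) (deriv (deriv γ) t) - dot (γ s - γ t) b)) t :=
  ((hasDerivAt_dot h₃ (hasDerivAt_const t _)).add
    (((hasDerivAt_nsq h₂).sub (hasDerivAt_dot (h₁.const_sub (γ s)) h₃)).const_mul _)).congr_deriv
    (by simp only [dot, Prod.fst_neg, Prod.snd_neg, Prod.fst_zero, Prod.snd_zero]; ring)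

section ContDiff

variable {γ : ℝ → ℝ × ℝ} (hγ : ContDiff ℝ 3 γ)
include hγ

theorem hasDerivAt_self_of_contDiff (t : ℝ) : HasDerivAt γ (deriv γ t) t :=
  (hγ.differentiable (by norm_num) t).hasDerivAt

theorem hasDerivAt_deriv_of_contDiff (t : ℝ) :
    HasDerivAt (deriv γ) (deriv (deriv γ) t) t :=
  ((hγ.iterate_deriv' 2 1).differentiable (by norm_num) t).hasDerivAt

theorem hasDerivAt_deriv_deriv_of_contDiff (t : ℝ) :
    HasDerivAt (deriv (deriv γ)) (deriv (deriv (deriv γ)) t) t :=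
  ((hγ.iterate_deriv' 1 2).differentiable (by norm_num) t).hasDerivAt

theorem hasDerivAt_curv (s : ℝ) :
    HasDerivAt (curv γ) (-dot (deriv (deriv (deriv γ)) s) (nor γ s)) s := by
  have hcurv : curv γ = fun s => -dot (deriv (deriv γ) s) (nor γ s) :=
    funext fun s => curv_eq_neg_dot_nor (hasDerivAt_deriv_of_contDiff hγ s).differentiableAt
  rw [hcurv]
  exact (hasDerivAt_dot (hasDerivAt_deriv_deriv_of_contDiff hγ s)
    (hasDerivAt_nor (hasDerivAt_deriv_of_contDiff hγ s))).neg.congr_deriv (by simp only [dot]; ring)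

theorem hasDerivAt_curv_eq_zero_of_osculatingPower_nonneg {x : ℝ}
    (hunit : ∀ᶠ t in 𝓝 x, nsq (deriv γ t) = 1)
    (hpow : ∀ᶠ t in 𝓝 x, 0 ≤ osculatingPower γ x t) : HasDerivAt (curv γ) 0 x := by
  have h₁ := hasDerivAt_self_of_contDiff hγ
  have h₂ := hasDerivAt_deriv_of_contDiff hγ
  have h₃ := hasDerivAt_deriv_deriv_of_contDiff hγ
  have horth := dot_deriv_deriv_eq_zero_of_nsq_deriv_eventually_eq_one (h₂ x) hunit
  have hthird := third_deriv_eq_zero_of_nonneg_nhds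
    (fun t => hasDerivAt_osculatingPower (s := x) (h₁ t))
    (fun t => hasDerivAt_osculatingPower_deriv (h₁ t) (h₂ t))
    (hasDerivAt_osculatingPower_deriv_deriv (h₁ x) (h₂ x) (h₃ x))
    (by simp [osculatingPower, nsq, dot]) (by simp only [dot_deriv_nor, sub_self]; simp [dot])
    (by rw [hunit.self_of_nhds, curv_eq_neg_dot_nor (h₂ x).differentiableAt]; simp [dot])
    hpow
  have hν : dot (deriv (deriv (deriv γ)) x) (nor γ x) = 0 := by
    rw [horth, sub_self] at hthird
    simpa [dot] using hthird
  simpa [hν] using hasDerivAt_curv hγ x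

end ContDiff

theorem stmt0 (I : Set ℝ) (hI : Convex ℝ I) (γ : ℝ → ℝ × ℝ)
    (hsm : ContDiff ℝ 3 γ)
    (hunit : ∀ s ∈ I, nsq (deriv γ s) = 1)
    (hin : ∀ s ∈ I, ∀ t ∈ I,
      curv γ s / 2 * nsq (γ s - γ t) - dot (γ s - γ t) (nor γ s) ≥ 0) :
    ∀ s ∈ I, ∀ t ∈ I, curv γ s = curv γ t := by
  have hcurv' : ∀ x ∈ interior I, HasDerivAt (curv γ) 0 x := fun x hx =>
    have hnhds : ∀ᶠ t in 𝓝 x, t ∈ I := mem_interior_iff_mem_nhds.mp hx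
    hasDerivAt_curv_eq_zero_of_osculatingPower_nonneg hsm (hnhds.mono hunit)
      (hnhds.mono (hin x (interior_subset hx)))
  have hcont : Continuous (curv γ) :=
    continuous_iff_continuousAt.mpr fun s => (hasDerivAt_curv hsm s).continuousAt
  exact fun s hs t ht => hI.eq_of_forall_hasDerivAt_eq_zero hcont.continuousOn hcurv' hs ht

end
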